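/- Every entire trajectory in the omega limit set L of a positive solution of the scaled KtW system satisfies Σ_i H_i(t) = Σ_i H_i* for all t, and consequently satisfies the reduced system H_i' = H_i(P_i* − P_i + Z* − Z), P_i' = n_i P_i(H_i − H_i*) (i < n), H_n' = H_n(Z* − Z), Z' = 0. -/

import Mathlib

open Filter Topology

lemma lyap_lb {a x : ℝ} (ha : 0 < a) (hx : 0 < x) :
    a - a * Real.log a ≤ x - a * Real.log x := by
  have h := Real.log_le_sub_one_of_pos (show (0:ℝ) < x / a by positivity)
  rw [Real.log_div (ne_of_gt hx) (ne_of_gt ha)] at h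
  have h2 := mul_le_mul_of_nonneg_left h ha.le
  have h3 : a * (x / a) = x := by field_simp
  nlinarith

lemma lyap_coord_lb {a x B : ℝ} (ha : 0 < a) (hx : 0 < x)
    (h : x - a * Real.log x ≤ B) : Real.exp (-(B / a)) ≤ x := by
  have h1 : -B ≤ a * Real.log x := by nlinarith
  have h2 : -(B / a) ≤ Real.log x := by
    rw [← neg_div, div_le_iff₀ ha]
    nlinarith
  calc Real.exp (-(B / a)) ≤ Real.exp (Real.log x) := Real.exp_le_exp.2 h2
    _ = x := Real.exp_log hx

lemma lyap_deriv {u : ℝ → ℝ} {a c t : ℝ} (hu : HasDerivAt u (u t * c) t) (hut : 0 < u t) :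
    HasDerivAt (fun s => u s - a * Real.log (u s)) ((u t - a) * c) t := by
  have h1 := hu.log (ne_of_gt hut)
  have h2 := hu.sub (h1.const_mul a)
  refine h2.congr_deriv (Eq.symm ?_)
  field_simp

lemma cluster_mem_of_eventually {α : Type*} {y : ℝ} {F : Filter α} {v : α → ℝ} {C : Set ℝ}
    (h : MapClusterPt y F v) (hC : IsClosed C) (hev : ∀ᶠ a in F, v a ∈ C) : y ∈ C := by
  have h1 : Filter.map v F ≤ Filter.principal C := le_principal_iff.2 (mem_map.2 hev)
  have h2 : ClusterPt y (Filter.principal C) := h.clusterPt.mono h1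
  exact hC.closure_eq ▸ mem_closure_iff_clusterPt.2 h2

lemma cluster_eq_of_tendsto {α : Type*} {y c : ℝ} {F : Filter α} [F.NeBot] {v : α → ℝ}
    (h : MapClusterPt y F v) (hv : Tendsto v F (𝓝 c)) : y = c :=
  eq_of_nhds_neBot (h.clusterPt.mono hv)

theorem ktw_omega_limit_trajectories_reduced_system
    (m : ℕ) (hm : 0 < m) (r : Fin (m+1) → ℝ) (w : ℝ) (ν e : Fin m → ℝ) (lam q : ℝ)
    (hr : ∀ i, 0 < r i) (hw : 0 < w) (hν : ∀ i, 0 < ν i) (he : ∀ i, 0 < e i)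
    (hlam : 0 < lam) (hq : 0 < q)
    -- existence conditions for the positive equilibrium
    (hc1 : w < r (Fin.last m)) (hc2 : ∀ i : Fin m, r (Fin.last m) < r i.castSucc)
    (hc3 : ∑ i, e i < q) (hc4 : q < r (Fin.last m) - w)
    -- the positive equilibrium
    (Hs : Fin (m+1) → ℝ) (Ps : Fin m → ℝ) (Zs : ℝ)
    (hHse : ∀ i : Fin m, Hs i.castSucc = e i) (hHsl : Hs (Fin.last m) = q - ∑ i, e i)
    (hPse : ∀ i : Fin m, Ps i = r i.castSucc - r (Fin.last m))
    (hZse : Zs = r (Fin.last m) - w - q)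
    -- a positive solution on [0,∞)
    (H : Fin (m+1) → ℝ → ℝ) (P : Fin m → ℝ → ℝ) (Z : ℝ → ℝ)
    (hH : ∀ i : Fin m, ∀ t ∈ Set.Ici (0:ℝ), HasDerivAt (H i.castSucc)
      (H i.castSucc t * (r i.castSucc - w - ∑ j, H j t)
        - H i.castSucc t * P i t - H i.castSucc t * Z t) t)
    (hHn : ∀ t ∈ Set.Ici (0:ℝ), HasDerivAt (H (Fin.last m))
      (H (Fin.last m) t * (r (Fin.last m) - w - ∑ j, H j t) - H (Fin.last m) t * Z t) t)
    (hPode : ∀ i : Fin m, ∀ t ∈ Set.Ici (0:ℝ), HasDerivAt (P i)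
      (ν i * P i t * (H i.castSucc t - e i)) t)
    (hZode : ∀ t ∈ Set.Ici (0:ℝ), HasDerivAt Z (lam * Z t * (∑ j, H j t - q)) t)
    (hpos : ∀ t ∈ Set.Ici (0:ℝ), (∀ i, 0 < H i t) ∧ (∀ j, 0 < P j t) ∧ 0 < Z t)
    -- an entire trajectory of the system lying in the omega limit set of the above solution
    (Ht : Fin (m+1) → ℝ → ℝ) (Pt : Fin m → ℝ → ℝ) (Zt : ℝ → ℝ)
    (hHt : ∀ i : Fin m, ∀ t : ℝ, HasDerivAt (Ht i.castSucc)
      (Ht i.castSucc t * (r i.castSucc - w - ∑ j, Ht j t)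
        - Ht i.castSucc t * Pt i t - Ht i.castSucc t * Zt t) t)
    (hHtn : ∀ t : ℝ, HasDerivAt (Ht (Fin.last m))
      (Ht (Fin.last m) t * (r (Fin.last m) - w - ∑ j, Ht j t) - Ht (Fin.last m) t * Zt t) t)
    (hPt : ∀ i : Fin m, ∀ t : ℝ, HasDerivAt (Pt i)
      (ν i * Pt i t * (Ht i.castSucc t - e i)) t)
    (hZt : ∀ t : ℝ, HasDerivAt Zt (lam * Zt t * (∑ j, Ht j t - q)) t)
    (hlimit : ∀ t : ℝ, MapClusterPt
      ((fun i => Ht i t, fun j => Pt j t, Zt t) : (Fin (m+1) → ℝ) × (Fin m → ℝ) × ℝ)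
      Filter.atTop (fun s => (fun i => H i s, fun j => P j s, Z s))) :
    ∀ t : ℝ,
      (∑ i, Ht i t) = (∑ i, Hs i) ∧
      (∀ i : Fin m, HasDerivAt (Ht i.castSucc)
        (Ht i.castSucc t * ((Ps i - Pt i t) + (Zs - Zt t))) t) ∧
      (∀ i : Fin m, HasDerivAt (Pt i) (ν i * Pt i t * (Ht i.castSucc t - Hs i.castSucc)) t) ∧
      HasDerivAt (Ht (Fin.last m)) (Ht (Fin.last m) t * (Zs - Zt t)) t ∧
      HasDerivAt Zt 0 t := by
    classical
  -- positivity of equilibrium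
  have hHsp : ∀ i, 0 < Hs i := by
    intro i
    induction i using Fin.lastCases with
    | last => rw [hHsl]; linarith
    | cast j => rw [hHse j]; exact he j
  have hPsp : ∀ j, 0 < Ps j := fun j => by rw [hPse j]; linarith [hc2 j]
  have hZsp : 0 < Zs := by rw [hZse]; linarith
  have hSq : ∑ i, Hs i = q := by
    rw [Fin.sum_univ_castSucc]
    rw [Finset.sum_congr rfl (fun j _ => hHse j), hHsl]
    ring
  -- derivative of the Lyapunov function along a curve satisfying the ODE at time t
  have gderiv : ∀ (h : Fin (m+1) → ℝ → ℝ) (p : Fin m → ℝ → ℝ) (z : ℝ → ℝ) (t : ℝ),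
      (∀ i : Fin m, HasDerivAt (h i.castSucc)
        (h i.castSucc t * (r i.castSucc - w - ∑ j, h j t)
          - h i.castSucc t * p i t - h i.castSucc t * z t) t) →
      HasDerivAt (h (Fin.last m))
        (h (Fin.last m) t * (r (Fin.last m) - w - ∑ j, h j t) - h (Fin.last m) t * z t) t →
      (∀ i : Fin m, HasDerivAt (p i) (ν i * p i t * (h i.castSucc t - e i)) t) →
      HasDerivAt z (lam * z t * (∑ j, h j t - q)) t →
      (∀ i, 0 < h i t) → (∀ j, 0 < p j t) → 0 < z t →
      HasDerivAt (fun s =>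
        (∑ j : Fin m, (h j.castSucc s - Hs j.castSucc * Real.log (h j.castSucc s)))
        + (h (Fin.last m) s - Hs (Fin.last m) * Real.log (h (Fin.last m) s))
        + (∑ j : Fin m, (ν j)⁻¹ * (p j s - Ps j * Real.log (p j s)))
        + lam⁻¹ * (z s - Zs * Real.log (z s)))
      (-((∑ j, h j t) - q)^2) t := by
    intro h p z t hd1 hd2 hd3 hd4 hp1 hp2 hp3
    have dH : ∀ i : Fin m, HasDerivAt
        (fun s => h i.castSucc s - Hs i.castSucc * Real.log (h i.castSucc s))
        ((h i.castSucc t - Hs i.castSucc)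
          * (r i.castSucc - w - (∑ j, h j t) - p i t - z t)) t := by
      intro i
      refine lyap_deriv ?_ (hp1 _)
      convert hd1 i using 1
      ring
    have dHl : HasDerivAt
        (fun s => h (Fin.last m) s - Hs (Fin.last m) * Real.log (h (Fin.last m) s))
        ((h (Fin.last m) t - Hs (Fin.last m))
          * (r (Fin.last m) - w - (∑ j, h j t) - z t)) t := by
      refine lyap_deriv ?_ (hp1 _)
      convert hd2 using 1
      ring
    have dP : ∀ j : Fin m, HasDerivAt
        (fun s => (ν j)⁻¹ * (p j s - Ps j * Real.log (p j s)))
        ((p j t - Ps j) * (h j.castSucc t - e j)) t := by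
      intro j
      have h1 : HasDerivAt (p j) (p j t * (ν j * (h j.castSucc t - e j))) t := by
        convert hd3 j using 1
        ring
      have h2 := (lyap_deriv (a := Ps j) h1 (hp2 j)).const_mul ((ν j)⁻¹)
      refine h2.congr_deriv (Eq.symm ?_)
      have hνj : (ν j : ℝ) ≠ 0 := (hν j).ne'
      field_simp
    have dZ : HasDerivAt (fun s => lam⁻¹ * (z s - Zs * Real.log (z s)))
        ((z t - Zs) * ((∑ j, h j t) - q)) t := by
      have h1 : HasDerivAt z (z t * (lam * ((∑ j, h j t) - q))) t := by
        convert hd4 using 1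
        ring
      have h2 := (lyap_deriv (a := Zs) h1 hp3).const_mul (lam⁻¹)
      refine h2.congr_deriv (Eq.symm ?_)
      have hl : (lam : ℝ) ≠ 0 := hlam.ne'
      field_simp
    have hsum1 := HasDerivAt.fun_sum (u := Finset.univ) (fun j (_ : j ∈ Finset.univ) => dH j)
    have hsum3 := HasDerivAt.fun_sum (u := Finset.univ) (fun j (_ : j ∈ Finset.univ) => dP j)
    have htotal := ((hsum1.add dHl).add hsum3).add dZ
    have e1 : (∑ j : Fin m, (h j.castSucc t - Hs j.castSucc)
            * (r j.castSucc - w - (∑ k, h k t) - p j t - z t))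
        + (∑ j : Fin m, (p j t - Ps j) * (h j.castSucc t - e j))
        = (∑ j : Fin m, (h j.castSucc t - Hs j.castSucc))
            * (-((∑ k, h k t) - q) - (z t - Zs)) := by
      rw [Finset.sum_mul, ← Finset.sum_add_distrib]
      refine Finset.sum_congr rfl fun j _ => ?_
      rw [hHse j, hPse j, hZse]
      ring
    have e2 : (h (Fin.last m) t - Hs (Fin.last m))
          * (r (Fin.last m) - w - (∑ k, h k t) - z t)
        = (h (Fin.last m) t - Hs (Fin.last m))
          * (-((∑ k, h k t) - q) - (z t - Zs)) := by
      rw [hZse]; ring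
    have esum : (∑ j : Fin m, (h j.castSucc t - Hs j.castSucc))
        + (h (Fin.last m) t - Hs (Fin.last m)) = (∑ k, h k t) - q := by
      rw [← Fin.sum_univ_castSucc (f := fun i => h i t - Hs i), Finset.sum_sub_distrib, hSq]
    refine htotal.congr_deriv (Eq.symm ?_)
    linear_combination (-1 : ℝ) * e1 - e2
      - (-((∑ k, h k t) - q) - (z t - Zs)) * esum
  -- the Lyapunov function on the state space and along the solution
  set Vx : (Fin (m+1) → ℝ) × (Fin m → ℝ) × ℝ → ℝ := fun x =>
    (∑ j : Fin m, (x.1 j.castSucc - Hs j.castSucc * Real.log (x.1 j.castSucc)))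
    + (x.1 (Fin.last m) - Hs (Fin.last m) * Real.log (x.1 (Fin.last m)))
    + (∑ j : Fin m, (ν j)⁻¹ * (x.2.1 j - Ps j * Real.log (x.2.1 j)))
    + lam⁻¹ * (x.2.2 - Zs * Real.log (x.2.2)) with hVx
  set G : ℝ → ℝ := fun s =>
    (∑ j : Fin m, (H j.castSucc s - Hs j.castSucc * Real.log (H j.castSucc s)))
    + (H (Fin.last m) s - Hs (Fin.last m) * Real.log (H (Fin.last m) s))
    + (∑ j : Fin m, (ν j)⁻¹ * (P j s - Ps j * Real.log (P j s)))
    + lam⁻¹ * (Z s - Zs * Real.log (Z s)) with hG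
  have hGd : ∀ t ∈ Set.Ici (0:ℝ), HasDerivAt G (-((∑ j, H j t) - q)^2) t := by
    intro t ht
    simp only [hG]
    exact gderiv H P Z t (fun i => hH i t ht) (hHn t ht) (fun i => hPode i t ht) (hZode t ht)
      (hpos t ht).1 (hpos t ht).2.1 (hpos t ht).2.2
  have hGmono : AntitoneOn G (Set.Ici 0) := by
    apply antitoneOn_of_deriv_nonpos (convex_Ici 0)
    · intro x hx
      exact (hGd x hx).continuousAt.continuousWithinAt
    · intro x hx
      rw [interior_Ici] at hx
      exact (hGd x (Set.mem_Ici.2 (le_of_lt hx))).differentiableAt.differentiableWithinAt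
    · intro x hx
      rw [interior_Ici] at hx
      rw [(hGd x (Set.mem_Ici.2 (le_of_lt hx))).deriv]
      exact neg_nonpos.2 (sq_nonneg _)
  -- termwise lower bounds
  have hterm1 : ∀ t ∈ Set.Ici (0:ℝ), ∀ j : Fin m,
      Hs j.castSucc - Hs j.castSucc * Real.log (Hs j.castSucc)
        ≤ H j.castSucc t - Hs j.castSucc * Real.log (H j.castSucc t) :=
    fun t ht j => lyap_lb (hHsp _) ((hpos t ht).1 _)
  have hterm2 : ∀ t ∈ Set.Ici (0:ℝ),
      Hs (Fin.last m) - Hs (Fin.last m) * Real.log (Hs (Fin.last m))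
        ≤ H (Fin.last m) t - Hs (Fin.last m) * Real.log (H (Fin.last m) t) :=
    fun t ht => lyap_lb (hHsp _) ((hpos t ht).1 _)
  have hterm3 : ∀ t ∈ Set.Ici (0:ℝ), ∀ j : Fin m,
      (ν j)⁻¹ * (Ps j - Ps j * Real.log (Ps j)) ≤ (ν j)⁻¹ * (P j t - Ps j * Real.log (P j t)) :=
    fun t ht j => mul_le_mul_of_nonneg_left (lyap_lb (hPsp j) ((hpos t ht).2.1 j))
      (inv_nonneg.2 (hν j).le)
  have hterm4 : ∀ t ∈ Set.Ici (0:ℝ),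
      lam⁻¹ * (Zs - Zs * Real.log Zs) ≤ lam⁻¹ * (Z t - Zs * Real.log (Z t)) :=
    fun t ht => mul_le_mul_of_nonneg_left (lyap_lb hZsp ((hpos t ht).2.2)) (inv_nonneg.2 hlam.le)
  have hsum1lb : ∀ t ∈ Set.Ici (0:ℝ),
      (∑ j : Fin m, (Hs j.castSucc - Hs j.castSucc * Real.log (Hs j.castSucc)))
        ≤ ∑ j : Fin m, (H j.castSucc t - Hs j.castSucc * Real.log (H j.castSucc t)) :=
    fun t ht => Finset.sum_le_sum fun j _ => hterm1 t ht j
  have hsum3lb : ∀ t ∈ Set.Ici (0:ℝ),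
      (∑ j : Fin m, (ν j)⁻¹ * (Ps j - Ps j * Real.log (Ps j)))
        ≤ ∑ j : Fin m, (ν j)⁻¹ * (P j t - Ps j * Real.log (P j t)) :=
    fun t ht => Finset.sum_le_sum fun j _ => hterm3 t ht j
  set L : ℝ := (∑ j : Fin m, (Hs j.castSucc - Hs j.castSucc * Real.log (Hs j.castSucc)))
    + (Hs (Fin.last m) - Hs (Fin.last m) * Real.log (Hs (Fin.last m)))
    + (∑ j : Fin m, (ν j)⁻¹ * (Ps j - Ps j * Real.log (Ps j)))
    + lam⁻¹ * (Zs - Zs * Real.log Zs) with hL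
  have hGexp : ∀ t : ℝ, G t =
      (∑ j : Fin m, (H j.castSucc t - Hs j.castSucc * Real.log (H j.castSucc t)))
      + (H (Fin.last m) t - Hs (Fin.last m) * Real.log (H (Fin.last m) t))
      + (∑ j : Fin m, (ν j)⁻¹ * (P j t - Ps j * Real.log (P j t)))
      + lam⁻¹ * (Z t - Zs * Real.log (Z t)) := fun t => by simp only [hG]
  have hGL : ∀ t ∈ Set.Ici (0:ℝ), L ≤ G t := by
    intro t ht
    rw [hGexp t, hL]
    linarith [hsum1lb t ht, hterm2 t ht, hsum3lb t ht, hterm4 t ht]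
  have h0 : (0:ℝ) ∈ Set.Ici (0:ℝ) := Set.self_mem_Ici
  have hGB : ∀ t ∈ Set.Ici (0:ℝ), G t ≤ G 0 := fun t ht => hGmono h0 ht ht
  -- per-coordinate bounds for the solution
  have bndH : ∀ t ∈ Set.Ici (0:ℝ), ∀ i : Fin m,
      H i.castSucc t - Hs i.castSucc * Real.log (H i.castSucc t)
        ≤ G 0 - L + (Hs i.castSucc - Hs i.castSucc * Real.log (Hs i.castSucc)) := by
    intro t ht i
    have hs := Finset.single_le_sum
      (f := fun j : Fin m => (H j.castSucc t - Hs j.castSucc * Real.log (H j.castSucc t))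
        - (Hs j.castSucc - Hs j.castSucc * Real.log (Hs j.castSucc)))
      (fun j _ => sub_nonneg.2 (hterm1 t ht j)) (Finset.mem_univ i)
    rw [Finset.sum_sub_distrib] at hs
    have h1 := hGB t ht
    rw [hGexp t] at h1
    rw [hL]
    linarith [hterm2 t ht, hsum3lb t ht, hterm4 t ht]
  have bndHl : ∀ t ∈ Set.Ici (0:ℝ),
      H (Fin.last m) t - Hs (Fin.last m) * Real.log (H (Fin.last m) t)
        ≤ G 0 - L + (Hs (Fin.last m) - Hs (Fin.last m) * Real.log (Hs (Fin.last m))) := by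
    intro t ht
    have h1 := hGB t ht
    rw [hGexp t] at h1
    rw [hL]
    linarith [hsum1lb t ht, hsum3lb t ht, hterm4 t ht]
  have bndP : ∀ t ∈ Set.Ici (0:ℝ), ∀ i : Fin m,
      P i t - Ps i * Real.log (P i t)
        ≤ ν i * (G 0 - L) + (Ps i - Ps i * Real.log (Ps i)) := by
    intro t ht i
    have hs := Finset.single_le_sum
      (f := fun j : Fin m => (ν j)⁻¹ * (P j t - Ps j * Real.log (P j t))
        - (ν j)⁻¹ * (Ps j - Ps j * Real.log (Ps j)))
      (fun j _ => sub_nonneg.2 (hterm3 t ht j)) (Finset.mem_univ i)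
    rw [Finset.sum_sub_distrib] at hs
    have h1 := hGB t ht
    rw [hGexp t] at h1
    have hweight : (ν i)⁻¹ * (P i t - Ps i * Real.log (P i t))
        ≤ (G 0 - L) + (ν i)⁻¹ * (Ps i - Ps i * Real.log (Ps i)) := by
      rw [hL]
      linarith [hsum1lb t ht, hterm2 t ht, hterm4 t ht]
    have hw2 := mul_le_mul_of_nonneg_left hweight (hν i).le
    rw [← mul_assoc, mul_inv_cancel₀ (hν i).ne', one_mul, mul_add, ← mul_assoc,
      mul_inv_cancel₀ (hν i).ne', one_mul] at hw2
    linarith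
  have bndZ : ∀ t ∈ Set.Ici (0:ℝ),
      Z t - Zs * Real.log (Z t) ≤ lam * (G 0 - L) + (Zs - Zs * Real.log Zs) := by
    intro t ht
    have h1 := hGB t ht
    rw [hGexp t] at h1
    have hweight : lam⁻¹ * (Z t - Zs * Real.log (Z t))
        ≤ (G 0 - L) + lam⁻¹ * (Zs - Zs * Real.log Zs) := by
      rw [hL]
      linarith [hsum1lb t ht, hterm2 t ht, hsum3lb t ht]
    have hw2 := mul_le_mul_of_nonneg_left hweight hlam.le
    rw [← mul_assoc, mul_inv_cancel₀ hlam.ne', one_mul, mul_add, ← mul_assoc,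
      mul_inv_cancel₀ hlam.ne', one_mul] at hw2
    linarith
  -- lower bounds for the solution coordinates
  have solHlb : ∀ s ∈ Set.Ici (0:ℝ), ∀ i : Fin m,
      Real.exp (-((G 0 - L + (Hs i.castSucc - Hs i.castSucc * Real.log (Hs i.castSucc)))
        / Hs i.castSucc)) ≤ H i.castSucc s :=
    fun s hs i => lyap_coord_lb (hHsp _) ((hpos s hs).1 _) (bndH s hs i)
  have solHllb : ∀ s ∈ Set.Ici (0:ℝ),
      Real.exp (-((G 0 - L + (Hs (Fin.last m) - Hs (Fin.last m) * Real.log (Hs (Fin.last m))))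
        / Hs (Fin.last m))) ≤ H (Fin.last m) s :=
    fun s hs => lyap_coord_lb (hHsp _) ((hpos s hs).1 _) (bndHl s hs)
  have solPlb : ∀ s ∈ Set.Ici (0:ℝ), ∀ i : Fin m,
      Real.exp (-((ν i * (G 0 - L) + (Ps i - Ps i * Real.log (Ps i))) / Ps i)) ≤ P i s :=
    fun s hs i => lyap_coord_lb (hPsp _) ((hpos s hs).2.1 _) (bndP s hs i)
  have solZlb : ∀ s ∈ Set.Ici (0:ℝ),
      Real.exp (-((lam * (G 0 - L) + (Zs - Zs * Real.log Zs)) / Zs)) ≤ Z s :=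
    fun s hs => lyap_coord_lb hZsp ((hpos s hs).2.2) (bndZ s hs)
  -- closed-set cluster point argument
  have hcl : ∀ (φ : (Fin (m+1) → ℝ) × (Fin m → ℝ) × ℝ → ℝ), Continuous φ → ∀ (δ t : ℝ),
      (∀ s ∈ Set.Ici (0:ℝ), δ ≤ φ (fun i => H i s, fun j => P j s, Z s)) →
      δ ≤ φ (fun i => Ht i t, fun j => Pt j t, Zt t) := by
    intro φ hφ δ t hb
    have h1 := MapClusterPt.continuousAt_comp hφ.continuousAt (hlimit t)
    refine cluster_mem_of_eventually h1 isClosed_Ici ?_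
    filter_upwards [Filter.eventually_ge_atTop (0:ℝ)] with s hs
    exact hb s hs
  -- positivity of the trajectory
  have htrajpos : ∀ t : ℝ, (∀ i, 0 < Ht i t) ∧ (∀ j, 0 < Pt j t) ∧ 0 < Zt t := by
    intro t
    refine ⟨?_, ?_, ?_⟩
    · intro i
      induction i using Fin.lastCases with
      | last =>
        have := hcl (fun x => x.1 (Fin.last m)) ((continuous_apply _).comp continuous_fst) _ t
          (fun s hs => solHllb s hs)
        exact lt_of_lt_of_le (Real.exp_pos _) this
      | cast j =>
        have := hcl (fun x => x.1 j.castSucc) ((continuous_apply _).comp continuous_fst) _ t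
          (fun s hs => solHlb s hs j)
        exact lt_of_lt_of_le (Real.exp_pos _) this
    · intro j
      have := hcl (fun x => x.2.1 j) ((continuous_apply _).comp (continuous_fst.comp continuous_snd)) _ t
        (fun s hs => solPlb s hs j)
      exact lt_of_lt_of_le (Real.exp_pos _) this
    · have := hcl (fun x => x.2.2) (continuous_snd.comp continuous_snd) _ t
        (fun s hs => solZlb s hs)
      exact lt_of_lt_of_le (Real.exp_pos _) this
  -- the limit value of the Lyapunov function
  have hBdd : BddBelow (G '' Set.Ici 0) := ⟨L, fun x ⟨s, hs, hxe⟩ => hxe ▸ hGL s hs⟩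
  have hNe : (G '' Set.Ici 0).Nonempty := ⟨G 0, 0, h0, rfl⟩
  set c : ℝ := sInf (G '' Set.Ici 0) with hc
  have hGtend : Filter.Tendsto G Filter.atTop (nhds c) := by
    rw [tendsto_order]
    constructor
    · intro a ha
      filter_upwards [Filter.eventually_ge_atTop (0:ℝ)] with s hs
      exact lt_of_lt_of_le ha (csInf_le hBdd ⟨s, hs, rfl⟩)
    · intro a ha
      obtain ⟨x, ⟨s0, hs0, rfl⟩, hx⟩ := exists_lt_of_csInf_lt hNe ha
      filter_upwards [Filter.eventually_ge_atTop s0, Filter.eventually_ge_atTop (0:ℝ)] with s h1 h2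
      exact lt_of_le_of_lt (hGmono hs0 h2 h1) hx
  -- the Lyapunov function is constant equal to c on the trajectory
  have hVtraj : ∀ t : ℝ, Vx (fun i => Ht i t, fun j => Pt j t, Zt t) = c := by
    intro t
    obtain ⟨ht1, ht2, ht3⟩ := htrajpos t
    have hcoord : ∀ i : Fin (m+1), ContinuousAt
        (fun x : (Fin (m+1) → ℝ) × (Fin m → ℝ) × ℝ => x.1 i)
        ((fun i => Ht i t, fun j => Pt j t, Zt t)) :=
      fun i => ((continuous_apply i).comp continuous_fst).continuousAt
    have hcoordP : ∀ j : Fin m, ContinuousAt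
        (fun x : (Fin (m+1) → ℝ) × (Fin m → ℝ) × ℝ => x.2.1 j)
        ((fun i => Ht i t, fun j => Pt j t, Zt t)) :=
      fun j => ((continuous_apply j).comp (continuous_fst.comp continuous_snd)).continuousAt
    have hcoordZ : ContinuousAt
        (fun x : (Fin (m+1) → ℝ) × (Fin m → ℝ) × ℝ => x.2.2)
        ((fun i => Ht i t, fun j => Pt j t, Zt t)) :=
      (continuous_snd.comp continuous_snd).continuousAt
    have hVc : ContinuousAt Vx ((fun i => Ht i t, fun j => Pt j t, Zt t)) := by
      rw [hVx]
      refine ContinuousAt.add (ContinuousAt.add (ContinuousAt.add ?_ ?_) ?_) ?_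
      · exact tendsto_finset_sum _ fun j _ => (hcoord j.castSucc).sub
          (continuousAt_const.mul ((hcoord j.castSucc).log (ht1 _).ne'))
      · exact (hcoord (Fin.last m)).sub
          (continuousAt_const.mul ((hcoord (Fin.last m)).log (ht1 _).ne'))
      · exact tendsto_finset_sum _ fun j _ => continuousAt_const.mul
          ((hcoordP j).sub (continuousAt_const.mul ((hcoordP j).log (ht2 j).ne')))
      · exact continuousAt_const.mul
          (hcoordZ.sub (continuousAt_const.mul (hcoordZ.log ht3.ne')))
    have h1 := MapClusterPt.continuousAt_comp hVc (hlimit t)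
    have h2 : (Vx ∘ fun s => ((fun i => H i s, fun j => P j s, Z s) :
        (Fin (m+1) → ℝ) × (Fin m → ℝ) × ℝ)) = G := by
      funext s
      rw [hVx, hG]
      rfl
    rw [h2] at h1
    exact cluster_eq_of_tendsto h1 hGtend
  -- conservation along the trajectory
  have hStq : ∀ t : ℝ, (∑ j, Ht j t) = q := by
    intro t
    obtain ⟨ht1, ht2, ht3⟩ := htrajpos t
    have hd := gderiv Ht Pt Zt t (fun i => hHt i t) (hHtn t) (fun i => hPt i t) (hZt t) ht1 ht2 ht3
    have hfun : (fun s =>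
        (∑ j : Fin m, (Ht j.castSucc s - Hs j.castSucc * Real.log (Ht j.castSucc s)))
        + (Ht (Fin.last m) s - Hs (Fin.last m) * Real.log (Ht (Fin.last m) s))
        + (∑ j : Fin m, (ν j)⁻¹ * (Pt j s - Ps j * Real.log (Pt j s)))
        + lam⁻¹ * (Zt s - Zs * Real.log (Zt s))) = fun _ => c := by
      funext s
      have h3 := hVtraj s
      rw [hVx] at h3
      exact h3
    rw [hfun] at hd
    have h0' := hd.unique (hasDerivAt_const t c)
    have h2 : ((∑ j, Ht j t) - q)^2 = 0 := by linarith
    have h3 := pow_eq_zero_iff (n := 2) (by norm_num) |>.mp h2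
    linarith
  -- conclusion
  intro t
  refine ⟨?_, ?_, ?_, ?_, ?_⟩
  · rw [hStq t, hSq]
  · intro i
    have hh := hHt i t
    rw [hStq t] at hh
    convert hh using 1
    rw [hPse i, hZse]
    ring
  · intro i
    rw [hHse i]
    exact hPt i t
  · have hh := hHtn t
    rw [hStq t] at hh
    convert hh using 1
    rw [hZse]
    ring
  · have hh := hZt t
    rw [hStq t, sub_self, mul_zero] at hh
    exact hh
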